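/- Let G be a finite connected loopless multigraph and let v be a cut vertex decomposing G into connected induced subgraphs G_1 = G/H and H, where H is a tree. Then for every divisor f on G, ρ_G(f) = ρ_{G/H}(f_{G/H}). -/

import Mathlib

/-- A finite loopless multigraph on vertex set `V`, given by its symmetric
edge-multiplicity function `e`. -/
structure Multigraph (V : Type*) [Fintype V] [DecidableEq V] where
  e : V → V → ℕ
  symm : ∀ u v, e u v = e v u
  loopless : ∀ v, e v v = 0

namespace Multigraph

variable {V : Type*} [Fintype V] [DecidableEq V]

/-- The degree of a vertex of a multigraph. -/
def vdeg (G : Multigraph V) (v : V) : ℕ := ∑ u, G.e v u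

/-- The number of edges of a multigraph. -/
def edgeCount (G : Multigraph V) : ℕ := (∑ u, ∑ v, G.e u v) / 2

/-- The underlying simple graph (adjacency) of a multigraph. -/
def toSimple (G : Multigraph V) : SimpleGraph V where
  Adj u v := G.e u v ≠ 0
  symm := ⟨by intro u v (h : G.e u v ≠ 0); show G.e v u ≠ 0; rwa [G.symm]⟩
  loopless := ⟨by intro v (h : G.e v v ≠ 0); exact h (G.loopless v)⟩

/-- A multigraph is connected if its underlying simple graph is. -/
def Connected (G : Multigraph V) : Prop := G.toSimple.Connected

/-- The degree of a divisor `f : V → ℤ`. -/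
def degree (f : V → ℤ) : ℤ := ∑ v, f v

/-- A divisor is effective if all its values are nonnegative. -/
def Effective (f : V → ℤ) : Prop := ∀ v, 0 ≤ f v

/-- The divisor `x · Δ_G`, where `Δ_G` is the Laplacian matrix of `G`. -/
def lapApply (G : Multigraph V) (x : V → ℤ) : V → ℤ :=
  fun v => x v * (G.vdeg v : ℤ) - ∑ u, x u * (G.e u v : ℤ)

/-- Linear equivalence of divisors: `g = f + x Δ_G` for some `x : V → ℤ`. -/
def LinEquiv (G : Multigraph V) (f g : V → ℤ) : Prop :=
  ∃ x : V → ℤ, g = f + G.lapApply x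

/-- A divisor is L-effective if it is linearly equivalent to an effective divisor. -/
def LEffective (G : Multigraph V) (f : V → ℤ) : Prop :=
  ∃ g : V → ℤ, G.LinEquiv f g ∧ Effective g

/-- The Baker–Norine rank of a divisor: `-1` if `f` is not L-effective, and
otherwise the largest `r ≥ 0` such that `f - λ` is L-effective for every
effective divisor `λ` of degree `r`. -/
noncomputable def rank (G : Multigraph V) (f : V → ℤ) : ℤ :=
  sSup ({-1} ∪ {r : ℤ | 0 ≤ r ∧
    ∀ l : V → ℤ, Effective l → degree l = r → G.LEffective (f - l)})

/-- The divisor `ε_v`. -/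
def epsDiv (v : V) : V → ℤ := fun u => if u = v then 1 else 0

/-- A tree: a connected acyclic (multi)graph. -/
def IsTree (G : Multigraph V) : Prop :=
  G.toSimple.IsTree ∧ ∀ u v, G.e u v ≤ 1

/-- A cycle graph: connected, and every vertex has degree 2. -/
def IsCycleGraph (G : Multigraph V) : Prop :=
  G.Connected ∧ ∀ v, G.vdeg v = 2

/-- An edge: two vertices joined by a single edge. -/
def IsEdgeGraph (G : Multigraph V) : Prop :=
  Fintype.card V = 2 ∧ G.Connected ∧ ∀ u v, G.e u v ≤ 1

/-- A good divisor (on a cycle): degree `0` and linearly equivalent to `0`. -/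
def Good (G : Multigraph V) (f : V → ℤ) : Prop :=
  degree f = 0 ∧ G.LinEquiv f 0

/-- A bad divisor (on a cycle): degree `0` and not linearly equivalent to `0`. -/
def Bad (G : Multigraph V) (f : V → ℤ) : Prop :=
  degree f = 0 ∧ ¬ G.LinEquiv f 0

/-- The induced sub-multigraph on a finite set `S` of vertices. -/
def induce (G : Multigraph V) (S : Finset V) : Multigraph {x // x ∈ S} where
  e a b := G.e a.1 b.1
  symm := fun a b => G.symm a.1 b.1
  loopless := fun a => G.loopless a.1

/-- `v` decomposes the induced subgraph of `G` on `S` into the induced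
subgraphs on `V1` and `U`: they cover `S`, meet exactly in `v`, are both
connected, and there is no edge between `V1 \ {v}` and `U \ {v}`. -/
def DecompOn (G : Multigraph V) (S : Finset V) (v : V) (V1 U : Finset V) : Prop :=
  V1 ∪ U = S ∧ V1 ∩ U = {v} ∧
  (G.induce V1).Connected ∧ (G.induce U).Connected ∧
  ∀ a ∈ V1, ∀ b ∈ U, a ≠ v → b ≠ v → G.e a b = 0

/-- `v` decomposes `G` into the induced subgraphs on `V1` and `U`. -/
def Decomp (G : Multigraph V) (v : V) (V1 U : Finset V) : Prop :=
  G.DecompOn Finset.univ v V1 U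

/-- The contraction `f_{G/H}` of a divisor `f`, where `H = G(U)` and
`G/H = G(V1)`, the cut vertex being `v`. -/
def contractDiv (f : V → ℤ) (v : V) (V1 U : Finset V) : {x // x ∈ V1} → ℤ :=
  fun u => if u.1 = v then ∑ w ∈ U, f w else f u.1

/-- The zero `f_{N(H)}` of a divisor `f`, where `H = G(U)`, the cut vertex
being `v`. -/
def zeroDiv (f : V → ℤ) (v : V) (U : Finset V) : {x // x ∈ U} → ℤ :=
  fun u => if u.1 = v then - ∑ w ∈ U.erase v, f w else f u.1

/-- `ε_v` as a divisor on an induced subgraph. -/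
def epsDivOn (S : Finset V) (v : V) : {x // x ∈ S} → ℤ :=
  fun u => if u.1 = v then 1 else 0

/-- A simple cycle of `G`, given as a sub-multigraph (an edge-multiplicity
function bounded by that of `G`) which is connected on its support and in
which every vertex of its (nonempty) support has degree 2. -/
def IsCycleSubgraph (G : Multigraph V) (h : V → V → ℕ) : Prop :=
  (∀ u v, h u v ≤ G.e u v) ∧ (∀ u v, h u v = h v u) ∧
  (∀ v, (∑ u, h v u = 0) ∨ (∑ u, h v u = 2)) ∧
  (∃ v, ∑ u, h v u ≠ 0) ∧
  (∀ v w, (∑ u, h v u ≠ 0) → (∑ u, h w u ≠ 0) →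
    Relation.ReflTransGen (fun a b => h a b ≠ 0) v w)

/-- The vertex support of a sub-multigraph. -/
def cycleSupport (h : V → V → ℕ) : Finset V :=
  Finset.univ.filter (fun v => ∑ u, h v u ≠ 0)

/-- A cactus: a connected multigraph in which any two distinct simple cycles
have at most one vertex in common (in particular every edge has multiplicity
at most 2, since parallel edges form 2-cycles). -/
def IsCactus (G : Multigraph V) : Prop :=
  G.Connected ∧ (∀ u v, G.e u v ≤ 2) ∧
  ∀ h₁ h₂ : V → V → ℕ, G.IsCycleSubgraph h₁ → G.IsCycleSubgraph h₂ → h₁ ≠ h₂ →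
    (cycleSupport h₁ ∩ cycleSupport h₂).card ≤ 1

/-- One step of a block elimination scheme: `G(S')` is obtained from `G(S)`
by contracting a free block (an edge or a cycle) `G(U)` at the vertex `v`. -/
def BlockStep (G : Multigraph V) (S S' : Finset V) : Prop :=
  ∃ (v : V) (U : Finset V), G.DecompOn S v S' U ∧
    ((G.induce U).IsEdgeGraph ∨ (G.induce U).IsCycleGraph)

/-- A block elimination scheme: a sequence of contractions of free blocks,
starting from `G` and ending at a single vertex. -/
def HasBlockEliminationScheme (G : Multigraph V) : Prop :=
  ∃ (k : ℕ) (S : ℕ → Finset V), S 0 = Finset.univ ∧ (S k).card = 1 ∧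
    ∀ i < k, G.BlockStep (S i) (S (i + 1))

end Multigraph

open Multigraph

variable {V : Type*} [Fintype V] [DecidableEq V]

/-!
On a tree every divisor of degree `d` is linearly equivalent to `d ε_v`. The divisor `f_{N(H)}` has
degree `0` on `H`, so it is principal there, and extending a potential on `H` to `G` by its value at
the cut vertex shows that its extension by zero, which is `f - f_{G/H}` (with `f_{G/H}` extended by
zero), is principal on `G`. Conversely, a potential on `G` splits into a potential on `G/H` extended
by its value at `v` and one on `H` vanishing at `v`, so contracting a principal divisor of `G` gives
a principal divisor of `G/H`. Hence `f` is L-effective on `G` iff `f_{G/H}` is on `G/H`; since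
contraction preserves effectivity and degree and has extension by zero as a right inverse, the
ranks agree.
-/

namespace Multigraph

section Laplacian

variable (G : Multigraph V)

theorem lapApply_apply (x : V → ℤ) (p : V) :
    G.lapApply x p = ∑ q, (x p - x q) * G.e q p := by
  simp only [lapApply, vdeg, Nat.cast_sum, Finset.mul_sum, ← Finset.sum_sub_distrib, sub_mul,
    G.symm p]

theorem lapApply_add (x y : V → ℤ) : G.lapApply (x + y) = G.lapApply x + G.lapApply y := by
  funext p
  simp only [lapApply_apply, Pi.add_apply, ← Finset.sum_add_distrib]
  exact Finset.sum_congr rfl fun q _ => by ring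

def lapHom : (V → ℤ) →+ (V → ℤ) := AddMonoidHom.mk' G.lapApply G.lapApply_add

def principal : AddSubgroup (V → ℤ) := G.lapHom.range

variable {G}

theorem linEquiv_iff_sub_mem {f g : V → ℤ} : G.LinEquiv f g ↔ g - f ∈ G.principal := by
  refine ⟨fun ⟨x, hx⟩ => ⟨x, ?_⟩, fun ⟨x, hx⟩ => ⟨x, ?_⟩⟩
  · simp [lapHom, hx]
  · rw [show G.lapApply x = g - f from hx]
    abel

theorem LEffective.of_sub_mem {f g : V → ℤ} (hf : G.LEffective f) (h : f - g ∈ G.principal) :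
    G.LEffective g := by
  obtain ⟨e, hfe, he⟩ := hf
  refine ⟨e, linEquiv_iff_sub_mem.2 ?_, he⟩
  simpa using add_mem (linEquiv_iff_sub_mem.1 hfe) h

theorem degree_lapApply (x : V → ℤ) : degree (G.lapApply x) = 0 := by
  simp only [degree, lapApply_apply]
  have hswap : ∑ p, ∑ q, (x p - x q) * (G.e q p : ℤ)
      = ∑ p, ∑ q, (x q - x p) * (G.e p q : ℤ) := Finset.sum_comm
  have hneg : ∑ p, ∑ q, (x q - x p) * (G.e p q : ℤ)
      = -∑ p, ∑ q, (x p - x q) * (G.e q p : ℤ) := by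
    simp only [← Finset.sum_neg_distrib]
    exact Finset.sum_congr rfl fun p _ => Finset.sum_congr rfl fun q _ => by rw [G.symm]; ring
  linarith

end Laplacian

section Tree

variable {G : Multigraph V}

/-- Across an edge `uw` of a tree, the indicator of the side of `u` has Laplacian `ε_u - ε_w`. -/
theorem epsDiv_sub_epsDiv_mem_principal_of_adj (hT : G.IsTree) {u w : V} (huw : G.e u w ≠ 0) :
    epsDiv u - epsDiv w ∈ G.principal := by
  classical
  set D := G.toSimple.deleteEdges {s(u, w)}
  have hw : ¬ D.Reachable u w := SimpleGraph.isAcyclic_iff_forall_adj_isBridge.1 hT.1.isAcyclic huw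
  have hwu : G.e w u ≠ 0 := by rwa [G.symm]
  have hne : u ≠ w := fun h => huw (h ▸ G.loopless u)
  set x : V → ℤ := fun p => if D.Reachable u p then 1 else 0
  have hx : ∀ p q, D.Adj q p → x q = x p := fun p q hqp => by
    have h : D.Reachable u q ↔ D.Reachable u p :=
      ⟨fun h => h.trans hqp.reachable, fun h => h.trans hqp.symm.reachable⟩
    simp only [x, h]
  have hterm : ∀ p q, (x p - x q) * G.e q p =
      (if p = u ∧ q = w then 1 else 0) - (if p = w ∧ q = u then 1 else 0) := by
    intro p q
    by_cases hqp : G.e q p = 0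
    · have h1 : ¬ (p = u ∧ q = w) := by rintro ⟨rfl, rfl⟩; exact hwu hqp
      have h2 : ¬ (p = w ∧ q = u) := by rintro ⟨rfl, rfl⟩; exact huw hqp
      simp [hqp, h1, h2]
    by_cases hedge : s(q, p) = s(u, w)
    · have hxu : x u = 1 := by simp [x]
      have hxw : x w = 0 := by simp [x, hw]
      have he : G.e q p = 1 := le_antisymm (hT.2 q p) (Nat.one_le_iff_ne_zero.2 hqp)
      rcases Sym2.eq_iff.1 hedge with ⟨rfl, rfl⟩ | ⟨rfl, rfl⟩
      · simp [hxu, hxw, he, hne, hne.symm]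
      · simp [hxu, hxw, he, hne, hne.symm]
    · have h1 : ¬ (p = u ∧ q = w) := by rintro ⟨rfl, rfl⟩; exact hedge Sym2.eq_swap
      have h2 : ¬ (p = w ∧ q = u) := by rintro ⟨rfl, rfl⟩; exact hedge rfl
      simp [hx p q (SimpleGraph.deleteEdges_adj.2 ⟨hqp, hedge⟩), h1, h2]
  refine ⟨x, funext fun p => ?_⟩
  simp [lapHom, lapApply_apply, hterm, Finset.sum_sub_distrib, ite_and, epsDiv]

theorem epsDiv_sub_epsDiv_mem_principal (hT : G.IsTree) (a b : V) :
    epsDiv a - epsDiv b ∈ G.principal := by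
  obtain ⟨w⟩ := hT.1.connected.preconnected a b
  induction w with
  | nil => simp
  | @cons a c b hac _ ih =>
    rw [← sub_add_sub_cancel _ (epsDiv c)]
    exact add_mem (epsDiv_sub_epsDiv_mem_principal_of_adj hT hac) ih

theorem sub_degree_smul_epsDiv_mem_principal (hT : G.IsTree) (v : V) (g : V → ℤ) :
    g - degree g • epsDiv v ∈ G.principal := by
  have hsum : g - degree g • epsDiv v = ∑ u, g u • (epsDiv u - epsDiv v) := by
    funext p
    by_cases hp : p = v <;> simp [Finset.sum_apply, epsDiv, degree, mul_sub, hp]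
  rw [hsum]
  exact sum_mem fun u _ => zsmul_mem (epsDiv_sub_epsDiv_mem_principal hT u v) _

end Tree

section ExtendContract

variable {W : Type*} [DecidableEq W] {S : Finset W}

def extendDiv (S : Finset W) (g : {x // x ∈ S} → ℤ) : W → ℤ :=
  fun p => if h : p ∈ S then g ⟨p, h⟩ else 0

@[simp]
theorem extendDiv_coe (g : {x // x ∈ S} → ℤ) (p : {x // x ∈ S}) :
    extendDiv S g p = g p := by
  simp [extendDiv]

theorem extendDiv_of_notMem (g : {x // x ∈ S} → ℤ) {p : W} (hp : p ∉ S) :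
    extendDiv S g p = 0 :=
  dif_neg hp

theorem extendDiv_sub (g h : {x // x ∈ S} → ℤ) :
    extendDiv S (g - h) = extendDiv S g - extendDiv S h := by
  funext p
  by_cases hp : p ∈ S <;> simp [extendDiv, hp]

theorem sum_extendDiv (g : {x // x ∈ S} → ℤ) : ∑ p ∈ S, extendDiv S g p = degree g := by
  rw [← Finset.sum_coe_sort]
  simp [degree]

theorem Effective.extendDiv {g : {x // x ∈ S} → ℤ} (hg : Effective g) :
    Effective (extendDiv S g) := fun p => by
  by_cases hp : p ∈ S
  · exact (extendDiv_coe g ⟨p, hp⟩).symm ▸ hg _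
  · exact (extendDiv_of_notMem g hp).symm ▸ le_rfl

variable {v : W} {V1 U : Finset W}

theorem contractDiv_add (f g : W → ℤ) :
    contractDiv (f + g) v V1 U = contractDiv f v V1 U + contractDiv g v V1 U := by
  funext u
  by_cases hu : u.1 = v <;> simp [contractDiv, hu, Finset.sum_add_distrib]

theorem contractDiv_sub (f g : W → ℤ) :
    contractDiv (f - g) v V1 U = contractDiv f v V1 U - contractDiv g v V1 U := by
  funext u
  by_cases hu : u.1 = v <;> simp [contractDiv, hu, Finset.sum_sub_distrib]

theorem Effective.contractDiv {f : W → ℤ} (hf : Effective f) :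
    Effective (contractDiv f v V1 U) := fun u => by
  by_cases hu : u.1 = v
  · simpa [Multigraph.contractDiv, hu] using Finset.sum_nonneg fun w _ => hf w
  · simpa [Multigraph.contractDiv, hu] using hf u

theorem zeroDiv_mem_principal {H : Multigraph {x // x ∈ U}} (hT : H.IsTree) (hv : v ∈ U)
    (f : W → ℤ) : zeroDiv f v U ∈ H.principal := by
  have hdeg : degree (fun u : {x // x ∈ U} => f u) = f v + ∑ w ∈ U.erase v, f w := by
    rw [degree, Finset.sum_coe_sort U f, Finset.add_sum_erase U f hv]
  have hzero : zeroDiv f v U = (fun u : {x // x ∈ U} => f u)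
      - degree (fun u : {x // x ∈ U} => f u) • epsDiv (⟨v, hv⟩ : {x // x ∈ U}) := by
    funext u
    by_cases hu : u.1 = v
    · simp [zeroDiv, epsDiv, hu, hdeg, Subtype.ext_iff]
    · simp [zeroDiv, epsDiv, hu, Subtype.ext_iff]
  rw [hzero]
  exact sub_degree_smul_epsDiv_mem_principal hT _ _

end ExtendContract

section AttachedSubgraph

variable {G : Multigraph V} {S : Finset V} {v : V}

theorem degree_extendDiv (g : {x // x ∈ S} → ℤ) : degree (extendDiv S g) = degree g := by
  rw [← sum_extendDiv, degree]
  exact (Finset.sum_subset (Finset.subset_univ S) fun p _ hp => extendDiv_of_notMem g hp).symm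

def AttachedAt (G : Multigraph V) (S : Finset V) (v : V) : Prop :=
  ∀ a ∈ S, ∀ b ∉ S, a ≠ v → G.e a b = 0

theorem lapApply_eq_extendDiv (hS : G.AttachedAt S v) (x : V → ℤ)
    (hx : ∀ q ∉ S, x q = x v) :
    G.lapApply x = extendDiv S ((G.induce S).lapApply fun q => x q) := by
  have hflat : ∀ a ∈ S, ∀ b ∉ S, (x a - x b) * (G.e b a : ℤ) = 0 := fun a ha b hb => by
    by_cases hav : a = v
    · simp [hav, hx b hb]
    · simp [G.symm b a, hS a ha b hb hav]
  funext p
  rw [lapApply_apply]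
  by_cases hp : p ∈ S
  · lift p to {x // x ∈ S} using hp
    rw [extendDiv_coe, lapApply_apply, ← Finset.sum_subset (Finset.subset_univ S)
      fun q _ hq => hflat p p.2 q hq, ← Finset.sum_coe_sort]
    rfl
  · rw [extendDiv_of_notMem _ hp]
    refine Finset.sum_eq_zero fun q _ => ?_
    by_cases hq : q ∈ S
    · have h := hflat q hq p hp
      rw [G.symm] at h
      linarith
    · simp [hx p hp, hx q hq]

theorem extendDiv_mem_principal (hS : G.AttachedAt S v) (hv : v ∈ S)
    {g : {x // x ∈ S} → ℤ} (hg : g ∈ (G.induce S).principal) :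
    extendDiv S g ∈ G.principal := by
  obtain ⟨y, rfl⟩ := hg
  refine ⟨fun q => if h : q ∈ S then y ⟨q, h⟩ else y ⟨v, hv⟩, ?_⟩
  rw [lapHom, AddMonoidHom.mk'_apply, lapApply_eq_extendDiv hS _ fun q hq => by simp [hq, hv]]
  simp [lapHom]

theorem LEffective.extendDiv (hS : G.AttachedAt S v) (hv : v ∈ S)
    {g : {x // x ∈ S} → ℤ} (hg : (G.induce S).LEffective g) :
    G.LEffective (extendDiv S g) := by
  obtain ⟨e, hge, he⟩ := hg
  refine ⟨Multigraph.extendDiv S e, linEquiv_iff_sub_mem.2 ?_, he.extendDiv⟩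
  rw [← extendDiv_sub]
  exact extendDiv_mem_principal hS hv (linEquiv_iff_sub_mem.1 hge)

end AttachedSubgraph

section Contraction

variable {G : Multigraph V} {v : V} {V1 U : Finset V}

theorem Decomp.left_mem (hd : G.Decomp v V1 U) : v ∈ V1 :=
  (Finset.mem_inter.1 (hd.2.1 ▸ Finset.mem_singleton_self v)).1

theorem Decomp.right_mem (hd : G.Decomp v V1 U) : v ∈ U :=
  (Finset.mem_inter.1 (hd.2.1 ▸ Finset.mem_singleton_self v)).2

theorem Decomp.eq_of_mem (hd : G.Decomp v V1 U) {p : V} (h1 : p ∈ V1) (h2 : p ∈ U) : p = v :=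
  Finset.mem_singleton.1 (hd.2.1 ▸ Finset.mem_inter.2 ⟨h1, h2⟩)

theorem Decomp.mem_or_mem (hd : G.Decomp v V1 U) (p : V) : p ∈ V1 ∨ p ∈ U :=
  Finset.mem_union.1 (hd.1 ▸ Finset.mem_univ p)

theorem Decomp.attachedAt_left (hd : G.Decomp v V1 U) : G.AttachedAt V1 v :=
  fun a ha b hb hav =>
    hd.2.2.2.2 a ha b ((hd.mem_or_mem b).resolve_left hb) hav fun h => hb (h ▸ hd.left_mem)

theorem Decomp.attachedAt_right (hd : G.Decomp v V1 U) : G.AttachedAt U v :=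
  fun a ha b hb hav => by
    rw [G.symm]
    exact hd.2.2.2.2 b ((hd.mem_or_mem b).resolve_right hb) a ha
      (fun h => hb (h ▸ hd.right_mem)) hav

theorem Decomp.sum_univ_eq (hd : G.Decomp v V1 U) (F : V → ℤ) :
    ∑ p, F p = ∑ p ∈ V1.erase v, F p + ∑ p ∈ U, F p := by
  have hdisj : Disjoint (V1.erase v) U := Finset.disjoint_left.2 fun p h1 h2 =>
    (Finset.mem_erase.1 h1).1 (hd.eq_of_mem (Finset.mem_erase.1 h1).2 h2)
  have huniv : V1.erase v ∪ U = Finset.univ := by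
    refine Finset.eq_univ_of_forall fun p => ?_
    by_cases hp : p = v
    · exact Finset.mem_union_right _ (hp ▸ hd.right_mem)
    · rcases hd.mem_or_mem p with h | h
      · exact Finset.mem_union_left _ (Finset.mem_erase.2 ⟨hp, h⟩)
      · exact Finset.mem_union_right _ h
  rw [← Finset.sum_union hdisj, huniv]

theorem degree_contractDiv (hd : G.Decomp v V1 U) (f : V → ℤ) :
    degree (contractDiv f v V1 U) = degree f := by
  simp only [degree, Multigraph.contractDiv]
  rw [hd.sum_univ_eq,
    Finset.sum_coe_sort V1 fun p => if p = v then ∑ w ∈ U, f w else f p,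
    ← Finset.add_sum_erase V1 _ hd.left_mem, if_pos rfl, add_comm,
    Finset.sum_congr rfl fun p hp => if_neg (Finset.ne_of_mem_erase hp)]

theorem contractDiv_extendDiv_left (hd : G.Decomp v V1 U) (g : {x // x ∈ V1} → ℤ) :
    contractDiv (extendDiv V1 g) v V1 U = g := by
  funext u
  by_cases hu : u.1 = v
  · rw [contractDiv, if_pos hu, Finset.sum_eq_single_of_mem v hd.right_mem
      fun w hw hwv => extendDiv_of_notMem g fun h => hwv (hd.eq_of_mem h hw), ← hu, extendDiv_coe]
  · simp [contractDiv, hu]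

theorem contractDiv_extendDiv_right (hd : G.Decomp v V1 U) {g : {x // x ∈ U} → ℤ}
    (hg : degree g = 0) : contractDiv (extendDiv U g) v V1 U = 0 := by
  funext u
  by_cases hu : u.1 = v
  · simp [contractDiv, hu, sum_extendDiv, hg]
  · simp [contractDiv, hu, extendDiv_of_notMem g fun h => hu (hd.eq_of_mem u.2 h)]

theorem lapApply_eq_extendDiv_add_extendDiv (hd : G.Decomp v V1 U) (x : V → ℤ) :
    G.lapApply x = extendDiv V1 ((G.induce V1).lapApply fun u => x u)
      + extendDiv U ((G.induce U).lapApply fun u => x u - x v) := by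
  set x1 : V → ℤ := fun q => if q ∈ V1 then x q else x v
  set x2 : V → ℤ := fun q => if q ∈ U then x q - x v else 0
  have hx : x = x1 + x2 := funext fun q => by
    by_cases h1 : q ∈ V1 <;> by_cases h2 : q ∈ U
    · simp [x1, x2, hd.eq_of_mem h1 h2]
    · simp [x1, x2, h1, h2]
    · simp [x1, x2, h1, h2]
    · exact absurd (hd.mem_or_mem q) (by simp [h1, h2])
  conv_lhs => rw [hx]
  rw [lapApply_add, lapApply_eq_extendDiv hd.attachedAt_left x1
    fun q hq => by simp [x1, hq], lapApply_eq_extendDiv hd.attachedAt_right x2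
    fun q hq => by simp [x2, hq, hd.right_mem]]
  congr 3 <;> funext u <;> simp [x1, x2, u.2]

theorem contractDiv_lapApply (hd : G.Decomp v V1 U) (x : V → ℤ) :
    contractDiv (G.lapApply x) v V1 U = (G.induce V1).lapApply fun u => x u := by
  rw [lapApply_eq_extendDiv_add_extendDiv hd, contractDiv_add, contractDiv_extendDiv_left hd,
    contractDiv_extendDiv_right hd (degree_lapApply _), add_zero]

theorem LEffective.contractDiv (hd : G.Decomp v V1 U) {f : V → ℤ} (hf : G.LEffective f) :
    (G.induce V1).LEffective (contractDiv f v V1 U) := by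
  obtain ⟨e, ⟨x, rfl⟩, he⟩ := hf
  exact ⟨Multigraph.contractDiv (f + G.lapApply x) v V1 U,
    ⟨fun u => x u, by rw [contractDiv_add, contractDiv_lapApply hd]⟩, he.contractDiv⟩

theorem sub_extendDiv_contractDiv (hd : G.Decomp v V1 U) (f : V → ℤ) :
    f - extendDiv V1 (contractDiv f v V1 U) = extendDiv U (zeroDiv f v U) := by
  funext p
  by_cases h1 : p ∈ V1 <;> by_cases h2 : p ∈ U
  · obtain rfl := hd.eq_of_mem h1 h2
    simp only [extendDiv, contractDiv, zeroDiv, h1, h2, dif_pos, if_pos, Pi.sub_apply]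
    rw [← Finset.add_sum_erase U f h2]
    ring
  · have hpv : p ≠ v := fun h => h2 (h ▸ hd.right_mem)
    simp [extendDiv, contractDiv, h1, h2, hpv]
  · have hpv : p ≠ v := fun h => h1 (h ▸ hd.left_mem)
    simp [extendDiv, zeroDiv, h1, h2, hpv]
  · exact absurd (hd.mem_or_mem p) (by simp [h1, h2])

theorem leffective_iff_contractDiv (hd : G.Decomp v V1 U) (hT : (G.induce U).IsTree)
    {f : V → ℤ} : G.LEffective f ↔ (G.induce V1).LEffective (contractDiv f v V1 U) := by
  refine ⟨LEffective.contractDiv hd, fun h =>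
    (h.extendDiv hd.attachedAt_left hd.left_mem).of_sub_mem ?_⟩
  rw [sub_mem_comm_iff, sub_extendDiv_contractDiv hd]
  exact extendDiv_mem_principal hd.attachedAt_right hd.right_mem
    (zeroDiv_mem_principal hT hd.right_mem f)

theorem rank_contractDiv_of_leffective_iff (hd : G.Decomp v V1 U)
    (h : ∀ f, G.LEffective f ↔ (G.induce V1).LEffective (contractDiv f v V1 U))
    (f : V → ℤ) :
    G.rank f = (G.induce V1).rank (contractDiv f v V1 U) := by
  unfold rank
  congr 1
  ext r
  simp only [Set.mem_union, Set.mem_singleton_iff, Set.mem_ofPred_eq]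
  refine or_congr_right (and_congr_right fun _ =>
    ⟨fun hf l hl hdeg => ?_, fun hf l hl hdeg => ?_⟩)
  · have := (h _).1 (hf (extendDiv V1 l) hl.extendDiv (by rw [degree_extendDiv, hdeg]))
    rwa [contractDiv_sub, contractDiv_extendDiv_left hd] at this
  · rw [h, contractDiv_sub]
    exact hf _ hl.contractDiv (by rw [degree_contractDiv hd, hdeg])

end Contraction

end Multigraph

theorem rank_contract_tree_general (G : Multigraph V)
    (v : V) (V1 U : Finset V) (hd : G.Decomp v V1 U)
    (hH : (G.induce U).IsTree) (f : V → ℤ) :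
    G.rank f = (G.induce V1).rank (contractDiv f v V1 U) :=
  rank_contractDiv_of_leffective_iff hd (fun _ => leffective_iff_contractDiv hd hH) f

/-- if a cut vertex `v` decomposes `G` into `G/H = G(V1)` and
`H = G(U)` where `H` is a tree, then `ρ_G(f) = ρ_{G/H}(f_{G/H})`. -/
theorem rank_contract_tree (G : Multigraph V) (hG : G.Connected)
    (v : V) (V1 U : Finset V) (hd : G.Decomp v V1 U)
    (hH : (G.induce U).IsTree) (f : V → ℤ) :
    G.rank f = (G.induce V1).rank (contractDiv f v V1 U) :=
  rank_contract_tree_general G v V1 U hd hH f
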